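/- arXiv:2106.02405 — 4 statements merged into one kernel-verified Lean document; each statement's English description precedes it below -/
import Mathlib

section
/- Let a > 0, b ∈ ℂ, and let z₀ ∈ ℂ satisfy |z₀ − b| > a. Then the reflected point w* := b + a²/conj(z₀ − b) satisfies 0 < |w* − b| < a (it lies strictly inside the circle of radius a about b), and if f : ℂ → ℂ is complex-differentiable at z₀ and at every point w with |w − b| ≤ a, then the Milne–Thomson composite potential ω(z) = f(z) + conj(f(conj(a²/(z − b) + conj(b)))) is complex-differentiable at z₀. -/
open ComplexConjugate

lemma conj_conj_hasDerivAt {f : ℂ → ℂ} {c w : ℂ} (hf : HasDerivAt f c (conj w)) :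
    HasDerivAt (fun z : ℂ => conj (f (conj z))) (conj c) w := by
  rw [hasDerivAt_iff_tendsto] at hf ⊢
  have hconj : Filter.Tendsto (fun z : ℂ => conj z) (nhds w) (nhds (conj w)) :=
    Complex.continuous_conj.tendsto w
  refine (hf.comp hconj).congr fun z => ?_
  simp only [Function.comp]
  have e1 : conj (f (conj z) - f (conj w) - (conj z - conj w) * c)
      = conj (f (conj z)) - conj (f (conj w)) - (z - w) * conj c := by
    simp [map_sub, map_mul]
  have e2 : ‖conj z - conj w‖ = ‖z - w‖ := by
    rw [← map_sub]; exact RCLike.norm_conj _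
  rw [smul_eq_mul, smul_eq_mul, e2, ← e1, RCLike.norm_conj]

lemma conj_conj_diff {f : ℂ → ℂ} {w : ℂ} (hf : DifferentiableAt ℂ f (conj w)) :
    DifferentiableAt ℂ (fun z : ℂ => conj (f (conj z))) w :=
  (conj_conj_hasDerivAt hf.hasDerivAt).differentiableAt

/-- For `|z₀ - b| > a > 0`, the reflected point `w* = b + a²/conj(z₀ - b)` lies strictly
inside the circle of radius `a` about `b` (and is distinct from `b`), and if `f` is
complex-differentiable at `z₀` and at every point of the closed disc of radius `a` about `b`,
then the Milne–Thomson composite potential is complex-differentiable at `z₀`. -/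
theorem milne_thomson_differentiable (a : ℝ) (ha : 0 < a) (b z₀ : ℂ)
    (hz₀ : a < ‖z₀ - b‖) :
    (0 < ‖(b + (a : ℂ) ^ 2 / conj (z₀ - b)) - b‖ ∧
      ‖(b + (a : ℂ) ^ 2 / conj (z₀ - b)) - b‖ < a) ∧
    ∀ f : ℂ → ℂ, DifferentiableAt ℂ f z₀ →
      (∀ w : ℂ, ‖w - b‖ ≤ a → DifferentiableAt ℂ f w) →
      DifferentiableAt ℂ
        (fun z : ℂ => f z + conj (f (conj ((a : ℂ) ^ 2 / (z - b) + conj b)))) z₀ := by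
  have habspos : 0 < ‖z₀ - b‖ := lt_trans ha hz₀
  have hz0b : z₀ - b ≠ 0 := by
    intro h; rw [h] at habspos; simp at habspos
  have hb : ‖(b + (a : ℂ) ^ 2 / conj (z₀ - b)) - b‖
      = a ^ 2 / ‖z₀ - b‖ := by
    have : (b + (a : ℂ) ^ 2 / conj (z₀ - b)) - b = (a : ℂ) ^ 2 / conj (z₀ - b) := by ring
    rw [this, norm_div, Complex.norm_conj]
    simp [abs_of_pos ha]
  have hlt : a ^ 2 / ‖z₀ - b‖ < a := by
    rw [div_lt_iff₀ habspos]; nlinarith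
  refine ⟨⟨by rw [hb]; positivity, by rw [hb]; exact hlt⟩, ?_⟩
  intro f hf hdisc
  have hh : DifferentiableAt ℂ (fun z : ℂ => (a : ℂ) ^ 2 / (z - b) + conj b) z₀ :=
by
    have h1 : DifferentiableAt ℂ (fun z : ℂ => z - b) z₀ := differentiableAt_id.sub_const b
    exact ((differentiableAt_const _).div h1 hz0b).add (differentiableAt_const _)
  have key : DifferentiableAt ℂ (fun w : ℂ => conj (f (conj w)))
      ((a : ℂ) ^ 2 / (z₀ - b) + conj b) := by
    apply conj_conj_diff
    apply hdisc
    have e : conj ((a : ℂ) ^ 2 / (z₀ - b) + conj b) - b = (a : ℂ) ^ 2 / conj (z₀ - b) := by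
      simp [map_div₀]
    rw [e, norm_div, Complex.norm_conj]
    simp only [norm_pow, Complex.norm_real, Real.norm_eq_abs, abs_of_pos ha]
    exact le_of_lt hlt
  exact by have := key.comp z₀ hh; exact hf.add this
end

section
/- Let ψ : ℝ² → ℝ be differentiable, let p₀ ∈ ℝ² and r > 0, and suppose ψ takes the constant value c₀ at every point of the circle S = {p ∈ ℝ² : ‖p − p₀‖ = r}. Let γ = (γ₁, γ₂) : ℝ → ℝ² be a differentiable curve with γ₁′(t) = (∂ψ/∂y)(γ(t)) and γ₂′(t) = −(∂ψ/∂x)(γ(t)) for all t, and suppose ψ(γ(0)) ≠ c₀. Then the trajectory never reaches the obstacle boundary: ‖γ(t) − p₀‖ ≠ r for all t ∈ ℝ. -/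
/-!
Along a streamline, `d/dt ψ(γ t) = ∂ψ/∂x · ∂ψ/∂y − ∂ψ/∂y · ∂ψ/∂x = 0`, so `ψ` keeps its initial
value `ψ(γ 0) ≠ c₀` and the trajectory can never meet the circle, where `ψ = c₀`.
-/

/-- `(∂ψ/∂y, −∂ψ/∂x)`, where `L = fderiv ℝ ψ p`. -/
def streamVelocity (L : ℝ × ℝ →L[ℝ] ℝ) : ℝ × ℝ :=
  (L (0, 1), -L (1, 0))

theorem apply_streamVelocity_self (L : ℝ × ℝ →L[ℝ] ℝ) : L (streamVelocity L) = 0 := by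
  have hsplit : streamVelocity L =
      L (0, 1) • ((1 : ℝ), (0 : ℝ)) + (-L (1, 0)) • ((0 : ℝ), (1 : ℝ)) := by
    simp [streamVelocity]
  rw [hsplit, map_add, map_smul, map_smul, smul_eq_mul, smul_eq_mul]
  ring

theorem apply_eq_of_hasDerivAt_streamVelocity {ψ : ℝ × ℝ → ℝ} (hψ : Differentiable ℝ ψ)
    {γ : ℝ → ℝ × ℝ} (hγ : ∀ t, HasDerivAt γ (streamVelocity (fderiv ℝ ψ (γ t))) t)
    (s t : ℝ) : ψ (γ s) = ψ (γ t) := by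
  have hderiv : ∀ t, HasDerivAt (ψ ∘ γ) 0 t := fun t => by
    simpa only [apply_streamVelocity_self] using (hψ (γ t)).hasFDerivAt.comp_hasDerivAt t (hγ t)
  exact is_const_of_deriv_eq_zero (fun t => (hderiv t).differentiableAt)
    (fun t => (hderiv t).deriv) s t

theorem streamline_collision_free_general (ψ : ℝ × ℝ → ℝ) (hψ : Differentiable ℝ ψ)
    (p₀ : ℝ × ℝ) (r : ℝ) (c₀ : ℝ)
    (hconst : ∀ q : ℝ × ℝ,
      Real.sqrt ((q.1 - p₀.1) ^ 2 + (q.2 - p₀.2) ^ 2) = r → ψ q = c₀)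
    (γ₁ γ₂ : ℝ → ℝ)
    (h1 : ∀ t : ℝ, HasDerivAt γ₁ (fderiv ℝ ψ (γ₁ t, γ₂ t) (0, 1)) t)
    (h2 : ∀ t : ℝ, HasDerivAt γ₂ (-(fderiv ℝ ψ (γ₁ t, γ₂ t) (1, 0))) t)
    (h0 : ψ (γ₁ 0, γ₂ 0) ≠ c₀) :
    ∀ t : ℝ, Real.sqrt ((γ₁ t - p₀.1) ^ 2 + (γ₂ t - p₀.2) ^ 2) ≠ r := by
  intro t hcollide
  have hconserved := apply_eq_of_hasDerivAt_streamVelocity (γ := fun t => (γ₁ t, γ₂ t)) hψ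
    (fun t => (h1 t).prodMk (h2 t)) t 0
  exact h0 (hconserved ▸ hconst (γ₁ t, γ₂ t) hcollide)

/-- If the stream function `ψ` is constant equal to `c₀` on the circle of radius `r` about
`p₀`, then any flow trajectory starting on a level value different from `c₀` never reaches
the obstacle boundary. -/
theorem streamline_collision_free (ψ : ℝ × ℝ → ℝ) (hψ : Differentiable ℝ ψ)
    (p₀ : ℝ × ℝ) (r : ℝ) (hr : 0 < r) (c₀ : ℝ)
    (hconst : ∀ q : ℝ × ℝ,
      Real.sqrt ((q.1 - p₀.1) ^ 2 + (q.2 - p₀.2) ^ 2) = r → ψ q = c₀)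
    (γ₁ γ₂ : ℝ → ℝ)
    (h1 : ∀ t : ℝ, HasDerivAt γ₁ (fderiv ℝ ψ (γ₁ t, γ₂ t) (0, 1)) t)
    (h2 : ∀ t : ℝ, HasDerivAt γ₂ (-(fderiv ℝ ψ (γ₁ t, γ₂ t) (1, 0))) t)
    (h0 : ψ (γ₁ 0, γ₂ 0) ≠ c₀) :
    ∀ t : ℝ, Real.sqrt ((γ₁ t - p₀.1) ^ 2 + (γ₂ t - p₀.2) ^ 2) ≠ r :=
  streamline_collision_free_general ψ hψ p₀ r c₀ hconst γ₁ γ₂ h1 h2 h0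
end

section
/- Let K_p be a symmetric 2×2 real matrix, and let p_d : ℝ → ℝ² and ϑ_d : ℝ → ℝ be differentiable. Suppose p, v : ℝ → ℝ², ψ, s : ℝ → ℝ and r : ℝ → ℝ are such that p, ψ, s are differentiable with p′(t) = R(ψ(t))·v(t) and ψ′(t) = r(t) for all t. Define z_p(t) = R(ψ(t))ᵀ·(p(t) − p_d(s(t))), α_p(t) = −K_p·z_p(t) + R(ψ(t))ᵀ·p_d′(s(t))·ϑ_d(s(t)), z_v(t) = v(t) − α_p(t), and ω(t) = s′(t) − ϑ_d(s(t)). Then z_p is differentiable and satisfies z_p′(t) = −K_p·z_p(t) − r(t)·S·z_p(t) + z_v(t) − R(ψ(t))ᵀ·p_d′(s(t))·ω(t) for all t. -/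
open Matrix

/-- The 2×2 rotation matrix. -/
noncomputable def Rmat (ψ : ℝ) : Matrix (Fin 2) (Fin 2) ℝ :=
  !![Real.cos ψ, -Real.sin ψ; Real.sin ψ, Real.cos ψ]

/-- The 2×2 skew-symmetric matrix `S = [[0,-1],[1,0]]`. -/
def Smat : Matrix (Fin 2) (Fin 2) ℝ := !![0, -1; 1, 0]

/-- Dynamics of the body-frame position error in the backstepping maneuvering design:
`z_p' = -K_p z_p - r S z_p + z_v - ω R(ψ)ᵀ p_d'(s)`. -/
theorem position_error_dynamics (K : Matrix (Fin 2) (Fin 2) ℝ) (hK : K.IsSymm)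
    (p_d : ℝ → Fin 2 → ℝ) (hpd : Differentiable ℝ p_d)
    (ϑ_d : ℝ → ℝ) (hϑ : Differentiable ℝ ϑ_d)
    (p v : ℝ → Fin 2 → ℝ) (ψ s r : ℝ → ℝ)
    (hs : Differentiable ℝ s)
    (hp : ∀ t : ℝ, HasDerivAt p ((Rmat (ψ t)).mulVec (v t)) t)
    (hψ : ∀ t : ℝ, HasDerivAt ψ (r t) t)
    (z_p α_p z_v : ℝ → Fin 2 → ℝ) (ω : ℝ → ℝ)
    (hzp : ∀ t : ℝ, z_p t = (Rmat (ψ t))ᵀ.mulVec (p t - p_d (s t)))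
    (hαp : ∀ t : ℝ, α_p t =
      -(K.mulVec (z_p t)) + ϑ_d (s t) • (Rmat (ψ t))ᵀ.mulVec (deriv p_d (s t)))
    (hzv : ∀ t : ℝ, z_v t = v t - α_p t)
    (hω : ∀ t : ℝ, ω t = deriv s t - ϑ_d (s t)) :
    ∀ t : ℝ, HasDerivAt z_p
      (-(K.mulVec (z_p t)) - r t • Smat.mulVec (z_p t) + z_v t
        - ω t • (Rmat (ψ t))ᵀ.mulVec (deriv p_d (s t))) t := by

  intro t
  have hfun : z_p = fun t => (Rmat (ψ t))ᵀ.mulVec (p t - p_d (s t)) := funext hzp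
  have hs' : HasDerivAt s (deriv s t) t := (hs t).hasDerivAt
  have hpdc : ∀ j : Fin 2, HasDerivAt (fun t => p_d (s t) j)
      (deriv p_d (s t) j * deriv s t) t := by
    intro j
    have h1 : HasDerivAt p_d (deriv p_d (s t)) (s t) := (hpd (s t)).hasDerivAt
    exact (hasDerivAt_pi.1 h1 j).comp t hs'
  have hpc : ∀ j : Fin 2, HasDerivAt (fun t => p t j)
      ((Rmat (ψ t)).mulVec (v t) j) t := fun j => hasDerivAt_pi.1 (hp t) j
  rw [hfun]
  rw [hasDerivAt_pi]
  intro i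
  have hcos : HasDerivAt (fun t => Real.cos (ψ t)) (-Real.sin (ψ t) * r t) t := (hψ t).cos
  have hsin : HasDerivAt (fun t => Real.sin (ψ t)) (Real.cos (ψ t) * r t) t := (hψ t).sin
  have h0 := (hpc 0).sub (hpdc 0)
  have h1 := (hpc 1).sub (hpdc 1)
  fin_cases i <;> beta_reduce
  · have key := (hcos.mul h0).add (hsin.mul h1)
    convert key using 2
    · simp [Rmat, mulVec, dotProduct, Fin.sum_univ_two, Fin.mk_zero, Fin.mk_one]
    simp only [Fin.mk_zero, Fin.mk_one, hzv, hαp, hω, hzp t, Rmat, Smat, mulVec, dotProduct,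
      Fin.sum_univ_two, Pi.add_apply, Pi.sub_apply, Pi.neg_apply, Pi.smul_apply, smul_eq_mul,
      Matrix.transpose_apply, Matrix.of_apply, Matrix.cons_val', Matrix.cons_val_zero,
      Matrix.cons_val_one, Matrix.head_cons, Matrix.head_fin_const, Matrix.empty_val',
      Matrix.cons_val_fin_one]
    linear_combination (-(v t 0)) * Real.sin_sq_add_cos_sq (ψ t)
  · have key := ((hsin.neg.mul h0)).add (hcos.mul h1)
    convert key using 2
    · simp [Rmat, mulVec, dotProduct, Fin.sum_univ_two, Fin.mk_zero, Fin.mk_one]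
    simp only [Fin.mk_zero, Fin.mk_one, hzv, hαp, hω, hzp t, Rmat, Smat, mulVec, dotProduct,
      Fin.sum_univ_two, Pi.add_apply, Pi.sub_apply, Pi.neg_apply, Pi.smul_apply, smul_eq_mul,
      Matrix.transpose_apply, Matrix.of_apply, Matrix.cons_val', Matrix.cons_val_zero,
      Matrix.cons_val_one, Matrix.head_cons, Matrix.head_fin_const, Matrix.empty_val',
      Matrix.cons_val_fin_one]
    linear_combination (-(v t 1)) * Real.sin_sq_add_cos_sq (ψ t)
end

section
/- Let K_p be a symmetric 2×2 real matrix for which there exists λ₀ > 0 with xᵀ·K_p·x ≥ λ₀·‖x‖² for all x ∈ ℝ², let r : ℝ → ℝ be any function, and let d : ℝ → ℝ² satisfy ‖d(t)‖ ≤ c_d·e^{−λ_d·t} for all t ≥ 0, where c_d ≥ 0 and λ_d > 0. If z : ℝ → ℝ² is differentiable and satisfies z′(t) = −K_p·z(t) − r(t)·S·z(t) + d(t) for all t ≥ 0, then there exist constants c′ > 0 and λ′ > 0 (depending only on λ₀ and λ_d) such that ‖z(t)‖ ≤ c′·e^{−λ′·t}·(‖z(0)‖ + c_d) for all t ≥ 0.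 -/
open Matrix

/-!
Since `Sᵀ = -S`, the rotation term drops out of `(‖z‖²)' = 2 z ⬝ᵥ z'`; coercivity of `K_p` and
Young's inequality then give `(‖z‖²)' ≤ -μ ‖z‖² + (c_d² / λ₀) e^{-2μt}` with `μ = min λ₀ λ_d`.
For such a scalar inequality `e^{μt} ‖z‖² + (c_d² / (λ₀ μ)) e^{-μt}` is nonincreasing, so `‖z‖²`
decays at rate `μ` and `‖z‖` at rate `μ / 2`.
-/

open Real Set

theorem Smat_transpose : Smatᵀ = -Smat := by
  ext i j; fin_cases i <;> fin_cases j <;> simp [Smat]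

theorem dotProduct_mulVec_self_eq_zero_of_transpose_eq_neg {n : Type*} [Fintype n]
    {A : Matrix n n ℝ} (hA : Aᵀ = -A) (x : n → ℝ) : x ⬝ᵥ A *ᵥ x = 0 := by
  have h : x ⬝ᵥ A *ᵥ x = -(x ⬝ᵥ A *ᵥ x) := by
    conv_lhs => rw [dotProduct_mulVec, ← mulVec_transpose, hA, neg_mulVec, neg_dotProduct,
      dotProduct_comm]
  linarith

theorem dotProduct_self_nonneg {n : Type*} [Fintype n] (x : n → ℝ) : 0 ≤ x ⬝ᵥ x := by
  simpa using dotProduct_self_star_nonneg x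

theorem two_mul_dotProduct_le {n : Type*} [Fintype n] {ε : ℝ} (hε : 0 < ε) (x y : n → ℝ) :
    2 * (x ⬝ᵥ y) ≤ ε * (x ⬝ᵥ x) + ε⁻¹ * (y ⬝ᵥ y) := by
  have h := dotProduct_self_nonneg (ε • x - y)
  simp only [sub_dotProduct, dotProduct_sub, smul_dotProduct, dotProduct_smul, smul_eq_mul,
    dotProduct_comm y x] at h
  rw [← mul_le_mul_iff_right₀ hε]
  field_simp
  nlinarith

theorem HasDerivAt.dotProduct_self {n : Type*} [Fintype n] {z : ℝ → n → ℝ} {z' : n → ℝ}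
    {t : ℝ} (hz : HasDerivAt z z' t) :
    HasDerivAt (fun s => z s ⬝ᵥ z s) (2 * (z t ⬝ᵥ z')) t := by
  have hi := fun i => hasDerivAt_pi.1 hz i
  refine (HasDerivAt.fun_sum (u := Finset.univ) fun i _ => (hi i).mul (hi i)).congr_deriv ?_
  simp only [dotProduct, Finset.mul_sum]
  exact Finset.sum_congr rfl fun i _ => by ring

theorem two_mul_dotProduct_dynamics_le {n : Type*} [Fintype n] {K A : Matrix n n ℝ}
    {lam₀ : ℝ} (hlam₀ : 0 < lam₀) (hK : ∀ x, lam₀ * (x ⬝ᵥ x) ≤ x ⬝ᵥ K *ᵥ x) (hA : Aᵀ = -A)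
    (ρ : ℝ) (x d : n → ℝ) :
    2 * (x ⬝ᵥ (-(K *ᵥ x) - ρ • A *ᵥ x + d)) ≤ -lam₀ * (x ⬝ᵥ x) + lam₀⁻¹ * (d ⬝ᵥ d) := by
  have hskew := dotProduct_mulVec_self_eq_zero_of_transpose_eq_neg hA x
  have hyoung := two_mul_dotProduct_le hlam₀ x d
  simp only [dotProduct_add, dotProduct_sub, dotProduct_neg, dotProduct_smul, hskew,
    smul_eq_mul, mul_zero]
  linarith [hK x]

theorem le_exp_neg_mul_of_hasDerivAt_le {u u' : ℝ → ℝ} {μ C t : ℝ} (hμ : 0 < μ) (hC : 0 ≤ C)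
    (hu : ∀ s, 0 ≤ s → HasDerivAt u (u' s) s)
    (hu' : ∀ s, 0 < s → u' s ≤ -μ * u s + C * exp (-(2 * μ) * s)) (ht : 0 ≤ t) :
    u t ≤ exp (-μ * t) * (u 0 + C / μ) := by
  set g : ℝ → ℝ := fun s => exp (μ * s) * u s + C / μ * exp (-μ * s)
  have hg : ∀ s, 0 ≤ s →
      HasDerivAt g (exp (μ * s) * (u' s + μ * u s) - C * exp (-μ * s)) s := fun s hs => by
    have hexp := fun a : ℝ => ((hasDerivAt_id s).const_mul a).exp
    refine (((hexp μ).mul (hu s hs)).add ((hexp (-μ)).const_mul (C / μ))).congr_deriv ?_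
    simp only [id]
    field_simp
    ring
  have hg' : ∀ s, 0 < s → exp (μ * s) * (u' s + μ * u s) - C * exp (-μ * s) ≤ 0 := fun s hs => by
    have h := mul_le_mul_of_nonneg_left (hu' s hs) (exp_pos (μ * s)).le
    have hexp : exp (μ * s) * exp (-(2 * μ) * s) = exp (-μ * s) := by rw [← exp_add]; ring_nf
    nlinarith
  have hanti : AntitoneOn g (Ici 0) :=
    antitoneOn_of_hasDerivWithinAt_nonpos (convex_Ici 0)
      (fun s hs => (hg s hs).continuousAt.continuousWithinAt)
      (fun s hs => by
        rw [interior_Ici] at hs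
        exact (hg s (le_of_lt hs)).hasDerivWithinAt)
      (fun s hs => by rw [interior_Ici] at hs; exact hg' s hs)
  have hgt : g t ≤ g 0 := hanti self_mem_Ici ht ht
  have htail : 0 ≤ C / μ * exp (-μ * t) := by positivity
  simp only [g, mul_zero, exp_zero, one_mul, mul_one] at hgt
  calc u t = exp (-μ * t) * (exp (μ * t) * u t) := by
        rw [← mul_assoc, ← exp_add]; simp
    _ ≤ exp (-μ * t) * (u 0 + C / μ) := by gcongr; linarith

theorem le_sq_mul_exp_of_sqrt_le {x c lam μ s : ℝ} (hc : 0 ≤ c) (hμ : μ ≤ lam) (hs : 0 ≤ s)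
    (h : √x ≤ c * exp (-lam * s)) : x ≤ c ^ 2 * exp (-(2 * μ) * s) := by
  have hμs : √x ≤ c * exp (-μ * s) := h.trans (by gcongr)
  rw [sqrt_le_left (by positivity), mul_pow, ← exp_nat_mul] at hμs
  convert hμs using 3
  push_cast
  ring

theorem sqrt_le_of_le_exp_neg_mul {a b c κ μ t : ℝ} (hb : 0 ≤ b) (hc : 0 ≤ c) (hκ : 0 ≤ κ)
    (h : a ≤ exp (-μ * t) * (b + (κ * c) ^ 2)) :
    √a ≤ (1 + κ) * exp (-(μ / 2) * t) * (√b + c) := by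
  have hsqrt : √(b + (κ * c) ^ 2) ≤ √b + κ * c := by
    rw [sqrt_le_left (by positivity), add_sq, sq_sqrt hb]
    nlinarith [mul_nonneg (sqrt_nonneg b) (mul_nonneg hκ hc)]
  calc √a ≤ √(exp (-μ * t)) * √(b + (κ * c) ^ 2) := by
        rw [← sqrt_mul (exp_pos _).le]; exact sqrt_le_sqrt h
    _ ≤ exp (-(μ / 2) * t) * (√b + κ * c) := by
        rw [← exp_half, show -μ * t / 2 = -(μ / 2) * t by ring]; gcongr
    _ ≤ (1 + κ) * exp (-(μ / 2) * t) * (√b + c) := by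
        rw [mul_comm (1 + κ), mul_assoc]; gcongr
        nlinarith [sqrt_nonneg b]

/-- Cascade step: the kinematic error system `z' = -K_p z - r S z + d`, driven by an
exponentially decaying perturbation `d`, converges exponentially with constants depending
only on `λ₀` and `λ_d` (the skew term does not affect `‖z‖`). -/
theorem cascade_exponential_convergence (lam₀ lam_d : ℝ) (hlam₀ : 0 < lam₀)
    (hlam_d : 0 < lam_d) :
    ∃ c' > (0 : ℝ), ∃ lam' > (0 : ℝ),
      ∀ K : Matrix (Fin 2) (Fin 2) ℝ, K.IsSymm →
        (∀ x : Fin 2 → ℝ, lam₀ * (x ⬝ᵥ x) ≤ x ⬝ᵥ K.mulVec x) →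
        ∀ r : ℝ → ℝ, ∀ c_d : ℝ, 0 ≤ c_d →
          ∀ d : ℝ → Fin 2 → ℝ,
            (∀ t : ℝ, 0 ≤ t → Real.sqrt (d t ⬝ᵥ d t) ≤ c_d * Real.exp (-lam_d * t)) →
            ∀ z : ℝ → Fin 2 → ℝ, Differentiable ℝ z →
              (∀ t : ℝ, 0 ≤ t →
                deriv z t = -(K.mulVec (z t)) - r t • Smat.mulVec (z t) + d t) →
              ∀ t : ℝ, 0 ≤ t →
                Real.sqrt (z t ⬝ᵥ z t)
                  ≤ c' * Real.exp (-lam' * t) * (Real.sqrt (z 0 ⬝ᵥ z 0) + c_d) := by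
  set μ := min lam₀ lam_d
  have hμ : 0 < μ := lt_min hlam₀ hlam_d
  set κ := (√(lam₀ * μ))⁻¹
  refine ⟨1 + κ, by positivity, μ / 2, by positivity,
    fun K _ hK r c_d hc_d d hd z hz hode t ht => ?_⟩
  have henergy : ∀ s, 0 < s → 2 * (z s ⬝ᵥ deriv z s)
      ≤ -μ * (z s ⬝ᵥ z s) + c_d ^ 2 / lam₀ * exp (-(2 * μ) * s) := fun s hs => by
    have hdyn := two_mul_dotProduct_dynamics_le hlam₀ hK Smat_transpose (r s) (z s) (d s)
    have hdamp : -lam₀ * (z s ⬝ᵥ z s) ≤ -μ * (z s ⬝ᵥ z s) :=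
      mul_le_mul_of_nonneg_right (by simp [μ]) (dotProduct_self_nonneg _)
    have hforce : lam₀⁻¹ * (d s ⬝ᵥ d s) ≤ c_d ^ 2 / lam₀ * exp (-(2 * μ) * s) := by
      rw [div_eq_inv_mul, mul_assoc]
      gcongr
      exact le_sq_mul_exp_of_sqrt_le hc_d (min_le_right _ _) hs.le (hd s hs.le)
    rw [hode s hs.le]
    linarith
  have hdecay := le_exp_neg_mul_of_hasDerivAt_le hμ (by positivity)
    (fun s _ => (hz s).hasDerivAt.dotProduct_self) henergy ht
  have hκ : c_d ^ 2 / lam₀ / μ = (κ * c_d) ^ 2 := by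
    rw [mul_pow, inv_pow, sq_sqrt (by positivity)]; field_simp
  rw [hκ] at hdecay
  exact sqrt_le_of_le_exp_neg_mul (dotProduct_self_nonneg _) hc_d (by positivity) hdecay
end
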